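/- arXiv:1805.01267 — 2 statements merged into one kernel-verified Lean document; each statement's English description precedes it below -/
import Mathlib

section
/- Let q ≥ 7 be a prime power and let B be a double blocking set of size 3q-1 in PG(2,q). If ell and m are two distinct (q-1)-secants of B, then their intersection point ell ∩ m belongs to B. -/
/-- Points (and, dually, lines) of the projective plane `PG(2,q)` over a field `F` with
`q` elements: one-dimensional subspaces of `F^3`, i.e. the projectivization of `F^3`. -/
abbrev PG2 (F : Type*) [Field F] : Type _ := Projectivization F (Fin 3 → F)

/-- The point `P` lies on the line `L` (both given by homogeneous coordinates):
`(x:y:z)` lies on `[a:b:c]` iff `ax + by + cz = 0`. -/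
def PG2.incident {F : Type*} [Field F] (P L : PG2 F) : Prop :=
  P.rep 0 * L.rep 0 + P.rep 1 * L.rep 1 + P.rep 2 * L.rep 2 = 0

/-- The set of points of the line `L`. -/
def PG2.linePts {F : Type*} [Field F] (L : PG2 F) : Set (PG2 F) :=
  {P | PG2.incident P L}

/-- `B` is a `t`-fold blocking set: every line meets `B` in at least `t` points. -/
def PG2.IsBlocking {F : Type*} [Field F] (t : ℕ) (B : Set (PG2 F)) : Prop :=
  ∀ L : PG2 F, t ≤ (B ∩ PG2.linePts L).ncard

/-- The point (or line) with homogeneous coordinates `(x:y:z)`. -/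
def PG2.mk3 {F : Type*} [Field F] (x y z : F) (h : x ≠ 0 ∨ y ≠ 0 ∨ z ≠ 0) : PG2 F :=
  Projectivization.mk F ![x, y, z] (by
    intro h0
    rcases h with h | h | h
    · exact h (by simpa using congrFun h0 0)
    · exact h (by simpa using congrFun h0 1)
    · exact h (by simpa using congrFun h0 2))

open PG2


section Aux
variable {F : Type*} [Field F]

def dotp (v w : Fin 3 → F) : F := v 0 * w 0 + v 1 * w 1 + v 2 * w 2

lemma dotp_comm (v w : Fin 3 → F) : dotp v w = dotp w v := by unfold dotp; ring

lemma dotp_smul (a : F) (v w : Fin 3 → F) : dotp (a • v) w = a * dotp v w := by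
  simp [dotp, Pi.smul_apply, smul_eq_mul]; ring

lemma incident_iff_dotp (P L : PG2 F) : incident P L ↔ dotp P.rep L.rep = 0 := Iff.rfl

lemma incident_symm (P L : PG2 F) : incident P L ↔ incident L P := by
  unfold PG2.incident; constructor <;> intro h <;> linear_combination h

lemma mk_dotp_left (v : Fin 3 → F) (hv : v ≠ 0) (w : Fin 3 → F) :
    dotp ((Projectivization.mk F v hv).rep) w = 0 ↔ dotp v w = 0 := by
  obtain ⟨a, ha⟩ := Projectivization.exists_smul_eq_mk_rep F v hv
  rw [← ha, Units.smul_def, dotp_smul, mul_eq_zero]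
  simp [a.ne_zero]

lemma mk_dotp_right (v : Fin 3 → F) (hv : v ≠ 0) (w : Fin 3 → F) :
    dotp w ((Projectivization.mk F v hv).rep) = 0 ↔ dotp w v = 0 := by
  rw [dotp_comm, mk_dotp_left, dotp_comm]

def crossv (u w : Fin 3 → F) : Fin 3 → F :=
  ![u 1 * w 2 - u 2 * w 1, u 2 * w 0 - u 0 * w 2, u 0 * w 1 - u 1 * w 0]

lemma dotp_crossv_left (u w : Fin 3 → F) : dotp u (crossv u w) = 0 := by
  simp [dotp, crossv]; ring

lemma dotp_crossv_right (u w : Fin 3 → F) : dotp w (crossv u w) = 0 := by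
  simp [dotp, crossv]; ring

lemma crossv_eq_zero {u w : Fin 3 → F} (hu : u ≠ 0) (h : crossv u w = 0) :
    ∃ c : F, w = c • u := by
  obtain ⟨i, hi⟩ := Function.ne_iff.mp hu
  have h0 := congrFun h 0
  have h1 := congrFun h 1
  have h2 := congrFun h 2
  simp [crossv, sub_eq_zero] at h0 h1 h2
  fin_cases i
  · have hi' : u 0 ≠ 0 := by simpa using hi
    refine ⟨w 0 / u 0, funext fun n => ?_⟩
    fin_cases n <;> simp [Pi.smul_apply, smul_eq_mul] <;> field_simp
    · linear_combination h2
    · linear_combination -h1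
  · have hi' : u 1 ≠ 0 := by simpa using hi
    refine ⟨w 1 / u 1, funext fun n => ?_⟩
    fin_cases n <;> simp [Pi.smul_apply, smul_eq_mul] <;> field_simp
    · linear_combination -h2
    · linear_combination h0
  · have hi' : u 2 ≠ 0 := by simpa using hi
    refine ⟨w 2 / u 2, funext fun n => ?_⟩
    fin_cases n <;> simp [Pi.smul_apply, smul_eq_mul] <;> field_simp
    · linear_combination h1
    · linear_combination -h0

lemma perp_perp {u w v : Fin 3 → F} (hn : crossv u w ≠ 0)
    (hv1 : dotp v u = 0) (hv2 : dotp v w = 0) : ∃ c : F, v = c • crossv u w := by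
  obtain ⟨i, hi⟩ := Function.ne_iff.mp hn
  unfold dotp at hv1 hv2
  fin_cases i
  · have hi' : u 1 * w 2 - u 2 * w 1 ≠ 0 := by simpa [crossv] using hi
    refine ⟨v 0 / (u 1 * w 2 - u 2 * w 1), funext fun n => ?_⟩
    fin_cases n <;> simp [Pi.smul_apply, smul_eq_mul, crossv] <;> field_simp
    · linear_combination (w 2) * hv1 - (u 2) * hv2
    · linear_combination -(w 1) * hv1 + (u 1) * hv2
  · have hi' : u 2 * w 0 - u 0 * w 2 ≠ 0 := by simpa [crossv] using hi
    refine ⟨v 1 / (u 2 * w 0 - u 0 * w 2), funext fun n => ?_⟩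
    fin_cases n <;> simp [Pi.smul_apply, smul_eq_mul, crossv] <;> field_simp
    · linear_combination -(w 2) * hv1 + (u 2) * hv2
    · linear_combination (w 0) * hv1 - (u 0) * hv2
  · have hi' : u 0 * w 1 - u 1 * w 0 ≠ 0 := by simpa [crossv] using hi
    refine ⟨v 2 / (u 0 * w 1 - u 1 * w 0), funext fun n => ?_⟩
    fin_cases n <;> simp [Pi.smul_apply, smul_eq_mul, crossv] <;> field_simp
    · linear_combination (w 1) * hv1 - (u 1) * hv2
    · linear_combination -(w 0) * hv1 + (u 0) * hv2

lemma eq_of_smul_rep {P Q : PG2 F} {c : F} (h : P.rep = c • Q.rep) : P = Q := by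
  have h1 : Projectivization.mk F P.rep P.rep_nonzero =
      Projectivization.mk F Q.rep Q.rep_nonzero :=
    (Projectivization.mk_eq_mk_iff' F _ _ _ _).mpr ⟨c, h.symm⟩
  rwa [Projectivization.mk_rep, Projectivization.mk_rep] at h1

lemma lines_eq_of_crossv {L M : PG2 F} (h : crossv L.rep M.rep = 0) : L = M := by
  obtain ⟨c, hc⟩ := crossv_eq_zero L.rep_nonzero h
  exact (eq_of_smul_rep hc).symm

lemma eq_of_mem_two_lines {L M P Q : PG2 F} (hLM : L ≠ M)
    (hPL : incident P L) (hPM : incident P M) (hQL : incident Q L) (hQM : incident Q M) :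
    P = Q := by
  have hn : crossv L.rep M.rep ≠ 0 := fun h => hLM (lines_eq_of_crossv h)
  obtain ⟨c, hc⟩ := perp_perp hn hPL hPM
  obtain ⟨d, hd⟩ := perp_perp hn hQL hQM
  have hd0 : d ≠ 0 := by
    rintro rfl; exact Q.rep_nonzero (by simpa using hd)
  have : P.rep = (c / d) • Q.rep := by
    rw [hc, hd, smul_smul, div_mul_cancel₀ _ hd0]
  exact eq_of_smul_rep this

lemma exists_line (P Q : PG2 F) : ∃ L : PG2 F, incident P L ∧ incident Q L := by
  by_cases hn : crossv P.rep Q.rep = 0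
  · obtain ⟨c, hc⟩ := crossv_eq_zero P.rep_nonzero hn
    by_cases h01 : P.rep 0 = 0 ∧ P.rep 1 = 0
    · have hw : (![1, 0, 0] : Fin 3 → F) ≠ 0 := by
        intro h; simpa using congrFun h 0
      refine ⟨Projectivization.mk F ![1, 0, 0] hw, ?_, ?_⟩
      · rw [incident_iff_dotp, mk_dotp_right]
        simp [dotp, h01.1]
      · rw [incident_iff_dotp, mk_dotp_right, hc, dotp_smul, mul_eq_zero]
        right; simp [dotp, h01.1]
    · have hw : (![-P.rep 1, P.rep 0, 0] : Fin 3 → F) ≠ 0 := by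
        intro h
        exact h01 ⟨by simpa using congrFun h 1, by simpa using (neg_eq_zero.mp (by simpa using congrFun h 0))⟩
      refine ⟨Projectivization.mk F _ hw, ?_, ?_⟩
      · rw [incident_iff_dotp, mk_dotp_right]
        simp [dotp]; ring
      · rw [incident_iff_dotp, mk_dotp_right, hc, dotp_smul, mul_eq_zero]
        right; simp [dotp]; ring
  · exact ⟨Projectivization.mk F _ hn,
      by rw [incident_iff_dotp, mk_dotp_right]; exact dotp_crossv_left _ _,
      by rw [incident_iff_dotp, mk_dotp_right]; exact dotp_crossv_right _ _⟩

lemma fin3_cover (i j k n : Fin 3) (hij : i ≠ j) (hik : i ≠ k) (hjk : j ≠ k) :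
    n = i ∨ n = j ∨ n = k := by
  revert hij hik hjk; revert i j k n; decide

lemma dotp_perm (i j k : Fin 3) (hij : i ≠ j) (hik : i ≠ k) (hjk : j ≠ k)
    (v u : Fin 3 → F) : dotp v u = v i * u i + v j * u j + v k * u k := by
  fin_cases i <;> fin_cases j <;> fin_cases k <;> simp_all [dotp] <;> ring

def vec3 (i j k : Fin 3) (a b c : F) : Fin 3 → F :=
  fun n => if n = i then a else if n = j then b else c

lemma vec3_i (i j k : Fin 3) (a b c : F) : vec3 i j k a b c i = a := if_pos rfl
lemma vec3_j (i j k : Fin 3) (hji : j ≠ i) (a b c : F) : vec3 i j k a b c j = b := by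
  simp [vec3, hji]
lemma vec3_k (i j k : Fin 3) (hki : k ≠ i) (hkj : k ≠ j) (a b c : F) :
    vec3 i j k a b c k = c := by simp [vec3, hki, hkj]

def lineVec (u : Fin 3 → F) (i j k : Fin 3) : Option F → (Fin 3 → F)
  | none => vec3 i j k (-(u k) / u i) 0 1
  | some t => vec3 i j k (-(u j + t * u k) / u i) 1 t

lemma line_param (L : PG2 F) (i j k : Fin 3) (hij : i ≠ j) (hik : i ≠ k) (hjk : j ≠ k)
    (hui : L.rep i ≠ 0) :
    ∃ f : Option F → PG2 F, Function.Injective f ∧ Set.range f = linePts L := by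
  have hvne : ∀ o : Option F, lineVec L.rep i j k o ≠ 0 := by
    rintro (_ | t) h <;> simp only [lineVec] at h
    · have := congrFun h k
      rw [vec3_k _ _ _ hik.symm hjk.symm] at this
      simpa using this
    · have := congrFun h j
      rw [vec3_j _ _ _ hij.symm] at this
      simpa using this
  refine ⟨fun o => Projectivization.mk F _ (hvne o), ?_, ?_⟩
  · intro o₁ o₂ h
    rw [Projectivization.mk_eq_mk_iff] at h
    obtain ⟨a, ha⟩ := h
    rcases o₁ with _ | t <;> rcases o₂ with _ | s <;> simp only [lineVec] at ha
    · rfl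
    · exfalso
      have := congrFun ha j
      rw [Pi.smul_apply, vec3_j _ _ _ hij.symm, vec3_j _ _ _ hij.symm] at this
      simp [Units.smul_def] at this
    · exfalso
      have := congrFun ha j
      rw [Pi.smul_apply, vec3_j _ _ _ hij.symm, vec3_j _ _ _ hij.symm] at this
      simp [Units.smul_def] at this
    · have haj := congrFun ha j
      rw [Pi.smul_apply, vec3_j _ _ _ hij.symm, vec3_j _ _ _ hij.symm] at haj
      have ha1 : (a : F) = 1 := by simpa [Units.smul_def] using haj
      have hak := congrFun ha k
      rw [Pi.smul_apply, vec3_k _ _ _ hik.symm hjk.symm, vec3_k _ _ _ hik.symm hjk.symm] at hak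
      rw [Units.smul_def, smul_eq_mul, ha1, one_mul] at hak
      rw [hak]
  · ext P
    simp only [Set.mem_range, linePts, Set.mem_setOf_eq, incident_iff_dotp]
    constructor
    · rintro ⟨o, rfl⟩
      rw [dotp_comm, mk_dotp_right, dotp_comm, dotp_perm i j k hij hik hjk]
      rcases o with _ | t
      · simp only [lineVec]
        rw [vec3_i, vec3_j _ _ _ hij.symm, vec3_k _ _ _ hik.symm hjk.symm]
        field_simp
        ring
      · simp only [lineVec]
        rw [vec3_i, vec3_j _ _ _ hij.symm, vec3_k _ _ _ hik.symm hjk.symm]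
        field_simp
        ring
    · intro hP
      rw [dotp_perm i j k hij hik hjk] at hP
      by_cases hj : P.rep j ≠ 0
      · refine ⟨some (P.rep k / P.rep j), ?_⟩
        conv_rhs => rw [← Projectivization.mk_rep P]
        rw [Projectivization.mk_eq_mk_iff' F]
        refine ⟨(P.rep j)⁻¹, funext fun n => ?_⟩
        simp only [lineVec]
        rcases fin3_cover i j k n hij hik hjk with rfl | rfl | rfl
        · rw [Pi.smul_apply, vec3_i, smul_eq_mul]
          field_simp
          linear_combination hP
        · rw [Pi.smul_apply, vec3_j _ _ _ hij.symm, smul_eq_mul]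
          field_simp
        · rw [Pi.smul_apply, vec3_k _ _ _ hik.symm hjk.symm, smul_eq_mul]
          field_simp
      · push_neg at hj
        by_cases hk : P.rep k ≠ 0
        · refine ⟨none, ?_⟩
          conv_rhs => rw [← Projectivization.mk_rep P]
          rw [Projectivization.mk_eq_mk_iff' F]
          refine ⟨(P.rep k)⁻¹, funext fun n => ?_⟩
          simp only [lineVec]
          rcases fin3_cover i j k n hij hik hjk with rfl | rfl | rfl
          · rw [Pi.smul_apply, vec3_i, smul_eq_mul]
            field_simp
            linear_combination hP - L.rep j * hj
          · rw [Pi.smul_apply, vec3_j _ _ _ hij.symm, smul_eq_mul, hj, mul_zero]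
          · rw [Pi.smul_apply, vec3_k _ _ _ hik.symm hjk.symm, smul_eq_mul]
            field_simp
        · push_neg at hk
          exfalso
          have hpi : P.rep i ≠ 0 := by
            obtain ⟨n, hn⟩ := Function.ne_iff.mp P.rep_nonzero
            rcases fin3_cover i j k n hij hik hjk with rfl | rfl | rfl
            · simpa using hn
            · exact absurd hj (by simpa using hn)
            · exact absurd hk (by simpa using hn)
          rw [hj, hk] at hP
          have h' : P.rep i * L.rep i = 0 := by linear_combination hP
          rcases mul_eq_zero.mp h' with h | h
          · exact hpi h
          · exact hui h

lemma line_ncard [Fintype F] (L : PG2 F) : (linePts L).ncard = Fintype.card F + 1 := by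
  obtain ⟨i, hi⟩ := Function.ne_iff.mp L.rep_nonzero
  have hex : ∃ f : Option F → PG2 F, Function.Injective f ∧ Set.range f = linePts L := by
    fin_cases i
    · exact line_param L 0 1 2 (by decide) (by decide) (by decide) (by simpa using hi)
    · exact line_param L 1 0 2 (by decide) (by decide) (by decide) (by simpa using hi)
    · exact line_param L 2 0 1 (by decide) (by decide) (by decide) (by simpa using hi)
  obtain ⟨f, hinj, hrange⟩ := hex
  rw [← hrange, ← Set.image_univ, Set.ncard_image_of_injective _ hinj, Set.ncard_univ,
    Nat.card_eq_fintype_card, Fintype.card_option]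

end Aux

/-- Let `q ≥ 7` be a prime power and let `B` be a double blocking set of size `3q-1` in
`PG(2,q)`. Then any two distinct `(q-1)`-secants of `B` meet in a point of `B`. -/
theorem dbs_long_secants_meet_in_B (F : Type*) [Field F] [Fintype F]
    (hq : 7 ≤ Fintype.card F)
    (B : Set (PG2 F)) (hB : IsBlocking 2 B)
    (hcard : B.ncard = 3 * Fintype.card F - 1)
    (l m : PG2 F) (hlm : l ≠ m)
    (hl : (B ∩ linePts l).ncard = Fintype.card F - 1)
    (hm : (B ∩ linePts m).ncard = Fintype.card F - 1) :
    ∀ P : PG2 F, incident P l → incident P m → P ∈ B := by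
  classical
  intro P hPl hPm
  by_contra hPB
  have hfinite : Finite (PG2 F) := Quotient.finite _
  set t : Finset (PG2 F) := (Set.toFinite (linePts P)).toFinset with ht
  have hmemt : ∀ L, L ∈ t ↔ incident P L := by
    intro L
    rw [ht, Set.Finite.mem_toFinset]
    exact (incident_symm P L).symm
  have htcard : t.card = Fintype.card F + 1 := by
    have h1 := line_ncard P
    rwa [Set.ncard_eq_toFinset_card _ (Set.toFinite _)] at h1
  have hlt : l ∈ t := (hmemt l).mpr hPl
  have hmt : m ∈ t := (hmemt m).mpr hPm
  set g : PG2 F → Finset (PG2 F) := fun L => (Set.toFinite (B ∩ linePts L)).toFinset with hg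
  have hBfin : (Set.toFinite B).toFinset = t.biUnion g := by
    ext b
    simp only [Set.Finite.mem_toFinset, Finset.mem_biUnion, hg]
    constructor
    · intro hb
      obtain ⟨L, hPL, hbL⟩ := exists_line P b
      exact ⟨L, (hmemt L).mpr hPL, hb, hbL⟩
    · rintro ⟨L, -, hbL⟩
      exact hbL.1
  have hdisj : ∀ L ∈ t, ∀ M ∈ t, L ≠ M → Disjoint (g L) (g M) := by
    intro L hL M hM hLM
    rw [Finset.disjoint_left]
    intro b hbL hbM
    rw [hg, Set.Finite.mem_toFinset] at hbL hbM
    have hb : b = P := eq_of_mem_two_lines hLM hbL.2 hbM.2 ((hmemt L).mp hL) ((hmemt M).mp hM)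
    exact hPB (hb ▸ hbL.1)
  have hcard' : B.ncard = ∑ L ∈ t, (B ∩ linePts L).ncard := by
    rw [Set.ncard_eq_toFinset_card _ (Set.toFinite B), hBfin, Finset.card_biUnion hdisj]
    exact Finset.sum_congr rfl fun L _ =>
      (Set.ncard_eq_toFinset_card _ (Set.toFinite _)).symm
  have hmt' : m ∈ t.erase l := Finset.mem_erase.mpr ⟨hlm.symm, hmt⟩
  have hsum1 : ∑ L ∈ t, (B ∩ linePts L).ncard
      = (B ∩ linePts l).ncard + ((B ∩ linePts m).ncard
        + ∑ L ∈ (t.erase l).erase m, (B ∩ linePts L).ncard) := by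
    rw [← Finset.add_sum_erase _ _ hlt, ← Finset.add_sum_erase _ _ hmt']
  have hsum2 : ((t.erase l).erase m).card • 2
      ≤ ∑ L ∈ (t.erase l).erase m, (B ∩ linePts L).ncard :=
    Finset.card_nsmul_le_sum _ _ _ fun L _ => hB L
  rw [smul_eq_mul] at hsum2
  have hc2 : ((t.erase l).erase m).card = Fintype.card F - 1 := by
    rw [Finset.card_erase_of_mem hmt', Finset.card_erase_of_mem hlt, htcard]
    omega
  omega
end

section
/- Let q ≥ 9 be a prime power and let B be a double blocking set of size 3q-1 in PG(2,q). If ell_1, ell_2, ell_3 are three pairwise distinct (q-1)-secants of B, then they are not concurrent, i.e. there is no point lying on all three of them. -/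
namespace PG2Aux

variable {F : Type*} [Field F]

instance [Fintype F] : Finite (PG2 F) := Quotient.finite _

/-- proportional: all 2x2 minors vanish -/
def Prl (v w : Fin 3 → F) : Prop :=
  v 0 * w 1 = v 1 * w 0 ∧ v 0 * w 2 = v 2 * w 0 ∧ v 1 * w 2 = v 2 * w 1

lemma exists_ne_zero {v : Fin 3 → F} (hv : v ≠ 0) : v 0 ≠ 0 ∨ v 1 ≠ 0 ∨ v 2 ≠ 0 := by
  by_contra h
  push_neg at h
  exact hv (by funext i; fin_cases i <;> simp [h.1, h.2.1, h.2.2])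

lemma prl_smul {v w : Fin 3 → F} (h : Prl v w) (hv : v ≠ 0) : ∃ c : F, w = c • v := by
  obtain ⟨h01, h02, h12⟩ := h
  rcases exists_ne_zero hv with h0 | h1 | h2
  · refine ⟨w 0 / v 0, funext fun i => ?_⟩
    fin_cases i <;> simp [Pi.smul_apply] <;> field_simp <;>
      [linear_combination h01; linear_combination h02]
  · refine ⟨w 1 / v 1, funext fun i => ?_⟩
    fin_cases i <;> simp [Pi.smul_apply] <;> field_simp <;>
      [linear_combination -h01; linear_combination h12]
  · refine ⟨w 2 / v 2, funext fun i => ?_⟩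
    fin_cases i <;> simp [Pi.smul_apply] <;> field_simp <;>
      [linear_combination -h02; linear_combination -h12]


lemma prl_symm {v w : Fin 3 → F} (h : Prl v w) : Prl w v :=
  ⟨by linear_combination -h.1, by linear_combination -h.2.1, by linear_combination -h.2.2⟩

lemma pg_eq_of_prl {X Y : PG2 F} (h : Prl X.rep Y.rep) : X = Y := by
  obtain ⟨c, hc⟩ := prl_smul h X.rep_nonzero
  have hc0 : c ≠ 0 := by
    rintro rfl
    exact Y.rep_nonzero (by simpa using hc)
  rw [← Projectivization.mk_rep X, ← Projectivization.mk_rep Y]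
  rw [Projectivization.mk_eq_mk_iff' F _ _ X.rep_nonzero Y.rep_nonzero]
  exact ⟨c⁻¹, by rw [hc]; funext i; simp [hc0]⟩

/-- ort form of incidence -/
lemma ort_def (P L : PG2 F) : PG2.incident P L ↔
    P.rep 0 * L.rep 0 + P.rep 1 * L.rep 1 + P.rep 2 * L.rep 2 = 0 := Iff.rfl

/-- two distinct points lie on at most one common line (self-dual statement). -/
lemma unique_line {L M P Q : PG2 F} (hLM : L ≠ M)
    (hPL : PG2.incident P L) (hPM : PG2.incident P M)
    (hQL : PG2.incident Q L) (hQM : PG2.incident Q M) : P = Q := by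
  set p := P.rep with hp
  set q := Q.rep with hq
  set l := L.rep with hl
  set m := M.rep with hm
  rw [ort_def] at hPL hPM hQL hQM
  -- n = cross product of p and q
  set n : Fin 3 → F := ![p 1 * q 2 - p 2 * q 1, p 2 * q 0 - p 0 * q 2, p 0 * q 1 - p 1 * q 0]
    with hn
  by_cases hn0 : n = 0
  · -- p, q proportional
    have h0 := congrFun hn0 0
    have h1 := congrFun hn0 1
    have h2 := congrFun hn0 2
    simp [hn] at h0 h1 h2
    exact pg_eq_of_prl ⟨by linear_combination h2, by linear_combination -h1,
      by linear_combination h0⟩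
  · exfalso
    -- l and m are both proportional to n
    have key : ∀ x : Fin 3 → F,
        p 0 * x 0 + p 1 * x 1 + p 2 * x 2 = 0 →
        q 0 * x 0 + q 1 * x 1 + q 2 * x 2 = 0 → Prl n x := by
      intro x h1 h2
      refine ⟨?_, ?_, ?_⟩ <;> simp only [hn, Matrix.cons_val_zero, Matrix.cons_val_one,
        Matrix.head_cons, Matrix.cons_val_two, Matrix.tail_cons]
      · linear_combination q 2 * h1 - p 2 * h2
      · linear_combination p 1 * h2 - q 1 * h1
      · linear_combination q 0 * h1 - p 0 * h2
    have hnl : Prl n l := key l (by linear_combination hPL) (by linear_combination hQL)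
    have hnm : Prl n m := key m (by linear_combination hPM) (by linear_combination hQM)
    obtain ⟨c, hcl⟩ := prl_smul hnl hn0
    obtain ⟨d, hdm⟩ := prl_smul hnm hn0
    apply hLM
    apply pg_eq_of_prl
    rw [← hl, ← hm, hcl, hdm]
    refine ⟨?_, ?_, ?_⟩ <;> simp only [Pi.smul_apply, smul_eq_mul] <;> ring


lemma line_family [Fintype F] (P : PG2 F) (w : F → Fin 3 → F) (hw0 : ∀ t, w t ≠ 0)
    (hinj : ∀ s t : F, (∃ a : Fˣ, (a : F) • w t = w s) → s = t)
    (hort : ∀ t, P.rep 0 * w t 0 + P.rep 1 * w t 1 + P.rep 2 * w t 2 = 0) :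
    Fintype.card F ≤ {L : PG2 F | PG2.incident P L}.ncard := by
  set f : F → PG2 F := fun t => Projectivization.mk F (w t) (hw0 t) with hf
  have hfinj : Function.Injective f := by
    intro s t h
    rw [hf] at h
    simp only at h
    rw [Projectivization.mk_eq_mk_iff F _ _ (hw0 s) (hw0 t)] at h
    obtain ⟨a, ha⟩ := h
    exact hinj s t ⟨a, ha⟩
  have hsub : Set.range f ⊆ {L : PG2 F | PG2.incident P L} := by
    rintro _ ⟨t, rfl⟩
    obtain ⟨a, ha⟩ := Projectivization.exists_smul_eq_mk_rep F (w t) (hw0 t)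
    show PG2.incident P _
    rw [ort_def]
    rw [hf]
    simp only
    rw [← ha]
    simp only [Pi.smul_apply, Units.smul_def, smul_eq_mul]
    linear_combination (a : F) * hort t
  calc Fintype.card F = (Set.range f).ncard := by
        rw [← Set.image_univ, Set.ncard_image_of_injective _ hfinj, Set.ncard_univ,
          Nat.card_eq_fintype_card]
    _ ≤ _ := Set.ncard_le_ncard hsub (Set.toFinite _)


lemma card_lines_through [Fintype F] (P : PG2 F) :
    Fintype.card F ≤ {L : PG2 F | PG2.incident P L}.ncard := by
  rcases exists_ne_zero P.rep_nonzero with h | h | h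
  · apply line_family P (fun t => ![-(P.rep 1) - t * P.rep 2, P.rep 0, t * P.rep 0])
    · intro t h0
      exact h (by simpa using congrFun h0 1)
    · rintro s t ⟨r, hr⟩
      have h1 := congrFun hr 1
      have h2 := congrFun hr 2
      simp [Units.smul_def] at h1 h2
      have hr1 : (r : F) = 1 := mul_right_cancel₀ h (by rw [h1, one_mul])
      rw [hr1, one_mul] at h2
      exact (mul_right_cancel₀ h h2).symm
    · intro t
      simp only [Matrix.cons_val_zero, Matrix.cons_val_one, Matrix.head_cons,
        Matrix.cons_val_two, Matrix.tail_cons]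
      ring
  · apply line_family P (fun t => ![t * P.rep 1, -(t * P.rep 0) - P.rep 2, P.rep 1])
    · intro t h0
      exact h (by simpa using congrFun h0 2)
    · rintro s t ⟨r, hr⟩
      have h1 := congrFun hr 2
      have h2 := congrFun hr 0
      simp [Units.smul_def] at h1 h2
      have hr1 : (r : F) = 1 := mul_right_cancel₀ h (by rw [h1, one_mul])
      rw [hr1, one_mul] at h2
      exact (mul_right_cancel₀ h h2).symm
    · intro t
      simp only [Matrix.cons_val_zero, Matrix.cons_val_one, Matrix.head_cons,
        Matrix.cons_val_two, Matrix.tail_cons]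
      ring
  · apply line_family P (fun t => ![P.rep 2, t * P.rep 2, -(P.rep 0) - t * P.rep 1])
    · intro t h0
      exact h (by simpa using congrFun h0 0)
    · rintro s t ⟨r, hr⟩
      have h1 := congrFun hr 0
      have h2 := congrFun hr 1
      simp [Units.smul_def] at h1 h2
      have hr1 : (r : F) = 1 := mul_right_cancel₀ h (by rw [h1, one_mul])
      rw [hr1, one_mul] at h2
      exact (mul_right_cancel₀ h h2).symm
    · intro t
      simp only [Matrix.cons_val_zero, Matrix.cons_val_one, Matrix.head_cons,
        Matrix.cons_val_two, Matrix.tail_cons]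
      ring


lemma sum_ncard_le {α β : Type*} [Finite α] (Y : Set α) (T : Finset β) (A : β → Set α)
    (hsub : ∀ i ∈ T, A i ⊆ Y)
    (hdisj : ∀ i ∈ T, ∀ j ∈ T, i ≠ j → Disjoint (A i) (A j)) :
    ∑ i ∈ T, (A i).ncard ≤ Y.ncard := by
  classical
  haveI := Fintype.ofFinite α
  calc ∑ i ∈ T, (A i).ncard = ∑ i ∈ T, (A i).toFinset.card := by
        simp [Set.ncard_eq_toFinset_card']
    _ = (T.biUnion fun i => (A i).toFinset).card := by
        rw [Finset.card_biUnion]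
        intro i hi j hj hij
        exact Set.disjoint_toFinset.2 (hdisj i hi j hj hij)
    _ ≤ Y.toFinset.card := by
        apply Finset.card_le_card
        intro x hx
        rw [Finset.mem_biUnion] at hx
        obtain ⟨i, hi, hxi⟩ := hx
        rw [Set.mem_toFinset] at hxi ⊢
        exact hsub i hi hxi
    _ = Y.ncard := (Set.ncard_eq_toFinset_card' _).symm

end PG2Aux

open PG2

/-- Let `q ≥ 9` be a prime power and let `B` be a double blocking set of size `3q-1` in
`PG(2,q)`. Then three pairwise distinct `(q-1)`-secants of `B` cannot be concurrent. -/
theorem dbs_three_long_secants_not_concurrent (F : Type*) [Field F] [Fintype F]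
    (hq : 9 ≤ Fintype.card F)
    (B : Set (PG2 F)) (hB : IsBlocking 2 B)
    (hcard : B.ncard = 3 * Fintype.card F - 1)
    (l1 l2 l3 : PG2 F) (h12 : l1 ≠ l2) (h23 : l2 ≠ l3) (h13 : l1 ≠ l3)
    (hl1 : (B ∩ linePts l1).ncard = Fintype.card F - 1)
    (hl2 : (B ∩ linePts l2).ncard = Fintype.card F - 1)
    (hl3 : (B ∩ linePts l3).ncard = Fintype.card F - 1) :
    ¬ ∃ P : PG2 F, incident P l1 ∧ incident P l2 ∧ incident P l3 := by
  rintro ⟨P, hP1, hP2, hP3⟩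
  classical
  -- five further lines through P
  have hS0card : 5 ≤ ({L : PG2 F | incident P L} \ {l1, l2, l3}).ncard := by
    have h1 := PG2Aux.card_lines_through P
    have h2 : ({l1, l2, l3} : Set (PG2 F)).ncard ≤ 3 := by
      apply (Set.ncard_insert_le _ _).trans
      have h3 := Set.ncard_insert_le l2 ({l3} : Set (PG2 F))
      have h4 : ({l3} : Set (PG2 F)).ncard = 1 := Set.ncard_singleton _
      omega
    have h3 := Set.ncard_le_ncard_diff_add_ncard {L : PG2 F | incident P L}
      {l1, l2, l3} (Set.toFinite _)
    omega
  have step : ∀ (S : Set (PG2 F)) (k : ℕ), k + 1 ≤ S.ncard →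
      ∃ m ∈ S, k ≤ (S \ {m}).ncard := by
    intro S k hk
    have hS : S.ncard ≠ 0 := by omega
    obtain ⟨m, hm⟩ := Set.nonempty_of_ncard_ne_zero hS
    refine ⟨m, hm, ?_⟩
    rw [Set.ncard_diff_singleton_of_mem hm]
    omega
  obtain ⟨m1, hm1, hc4⟩ := step _ 4 hS0card
  obtain ⟨m2, hm2, hc3⟩ := step _ 3 hc4
  obtain ⟨m3, hm3, hc2⟩ := step _ 2 hc3
  obtain ⟨m4, hm4, hc1⟩ := step _ 1 hc2
  obtain ⟨m5, hm5, -⟩ := step _ 0 hc1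
  simp only [Set.mem_diff, Set.mem_singleton_iff, Set.mem_setOf_eq, Set.mem_insert_iff,
    not_or] at hm1 hm2 hm3 hm4 hm5
  obtain ⟨hm1P, hm1a, hm1b, hm1c⟩ := hm1
  obtain ⟨⟨hm2P, hm2a, hm2b, hm2c⟩, hne21⟩ := hm2
  obtain ⟨⟨⟨hm3P, hm3a, hm3b, hm3c⟩, hne31⟩, hne32⟩ := hm3
  obtain ⟨⟨⟨⟨hm4P, hm4a, hm4b, hm4c⟩, hne41⟩, hne42⟩, hne43⟩ := hm4
  obtain ⟨⟨⟨⟨⟨hm5P, hm5a, hm5b, hm5c⟩, hne51⟩, hne52⟩, hne53⟩, hne54⟩ := hm5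
  set lines : Fin 8 → PG2 F := ![l1, l2, l3, m1, m2, m3, m4, m5] with hlines
  have hinc : ∀ i, incident P (lines i) := by
    intro i
    fin_cases i
    · exact hP1
    · exact hP2
    · exact hP3
    · exact hm1P
    · exact hm2P
    · exact hm3P
    · exact hm4P
    · exact hm5P
  have hne : ∀ i j : Fin 8, i ≠ j → lines i ≠ lines j := by
    intro i j hij
    fin_cases i <;> fin_cases j <;>
      first
        | exact absurd rfl hij
        | assumption
        | exact Ne.symm (by assumption)
  set A : Fin 8 → Set (PG2 F) := fun i => (B ∩ linePts (lines i)) \ {P} with hA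
  have hsum : ∑ i ∈ Finset.univ, (A i).ncard ≤ (B \ {P}).ncard := by
    apply PG2Aux.sum_ncard_le
    · intro i _
      exact Set.diff_subset_diff_left Set.inter_subset_left
    · intro i _ j _ hij
      rw [Set.disjoint_left]
      rintro Q ⟨⟨-, hQL⟩, hQP⟩ ⟨⟨-, hQM⟩, -⟩
      exact hQP (Set.mem_singleton_iff.mpr
        (PG2Aux.unique_line (hne i j hij) (hinc i) (hinc j) hQL hQM).symm)
  rw [Fin.sum_univ_eight] at hsum
  have eqA : A 0 = (B ∩ linePts l1) \ {P} ∧ A 1 = (B ∩ linePts l2) \ {P} ∧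
      A 2 = (B ∩ linePts l3) \ {P} ∧ A 3 = (B ∩ linePts m1) \ {P} ∧
      A 4 = (B ∩ linePts m2) \ {P} ∧ A 5 = (B ∩ linePts m3) \ {P} ∧
      A 6 = (B ∩ linePts m4) \ {P} ∧ A 7 = (B ∩ linePts m5) \ {P} :=
    ⟨rfl, rfl, rfl, rfl, rfl, rfl, rfl, rfl⟩
  obtain ⟨e0, e1, e2, e3, e4, e5, e6, e7⟩ := eqA
  rw [e0, e1, e2, e3, e4, e5, e6, e7] at hsum
  -- per-line bounds
  have hbound : ∀ L : PG2 F, (B ∩ linePts L).ncard ≤ ((B ∩ linePts L) \ {P}).ncard + 1 := by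
    intro L
    by_cases hP : P ∈ B ∩ linePts L
    · rw [Set.ncard_diff_singleton_of_mem hP]
      have : 0 < (B ∩ linePts L).ncard := (Set.ncard_pos (Set.toFinite _)).2 ⟨P, hP⟩
      omega
    · rw [Set.diff_singleton_eq_self hP]
      omega
  by_cases hPB : P ∈ B
  · have hBP : (B \ {P}).ncard + 1 = B.ncard := by
      rw [Set.ncard_diff_singleton_of_mem hPB]
      have : 0 < B.ncard := (Set.ncard_pos (Set.toFinite _)).2 ⟨P, hPB⟩
      omega
    have b0 := hbound l1
    have b1 := hbound l2
    have b2 := hbound l3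
    have b3 := (hB m1).trans (hbound m1)
    have b4 := (hB m2).trans (hbound m2)
    have b5 := (hB m3).trans (hbound m3)
    have b6 := (hB m4).trans (hbound m4)
    have b7 := (hB m5).trans (hbound m5)
    omega
  · have hBP : (B \ {P}) = B := Set.diff_singleton_eq_self hPB
    have hAL : ∀ L : PG2 F, (B ∩ linePts L) \ {P} = B ∩ linePts L := by
      intro L
      exact Set.diff_singleton_eq_self (fun h => hPB h.1)
    have b3 := hB m1
    have b4 := hB m2
    have b5 := hB m3
    have b6 := hB m4
    have b7 := hB m5
    rw [hBP, hAL l1, hAL l2, hAL l3, hAL m1, hAL m2, hAL m3, hAL m4, hAL m5] at hsum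
    omega
end
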